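/- The deformed Hamiltonians h_{z,1} = 1/(u−v), h_{z,2} = (1/2)·shc(2z/(u−v))·(u+v)/(u−v), h_{z,3} = [shc(2z/(u−v))²(u+v)² − (u−v)²]/(4·shc(2z/(u−v))·(u−v)) satisfy the deformed Casimir identity shc(2z·h_{z,1})·h_{z,1}·h_{z,3} − h_{z,2}² = −1/4 on ℝ²_{u≠v}. -/
import Mathlib

noncomputable def shc (x : ℝ) : ℝ := if x = 0 then 1 else Real.sinh x / x

lemma shc_pos (x : ℝ) : 0 < shc x := by
  unfold shc
  split
  · norm_num
  · rename_i h
    rcases lt_or_gt_of_ne h with h' | h'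
    · exact div_pos_of_neg_of_neg (by simpa using Real.sinh_neg_iff.2 h') h'
    · exact div_pos (Real.sinh_pos_iff.2 h') h'

theorem deformed_coupled_riccati_casimir (z u v : ℝ) (huv : u ≠ v) :
    shc (2 * z * (1 / (u - v))) * (1 / (u - v)) *
        ((shc (2 * z / (u - v)) ^ 2 * (u + v) ^ 2 - (u - v) ^ 2) /
          (4 * shc (2 * z / (u - v)) * (u - v))) -
      ((1 / 2) * shc (2 * z / (u - v)) * ((u + v) / (u - v))) ^ 2 = -(1 / 4) := by
  have hd : u - v ≠ 0 := sub_ne_zero.2 huv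
  have harg : 2 * z * (1 / (u - v)) = 2 * z / (u - v) := by ring
  rw [harg]
  have hs : shc (2 * z / (u - v)) ≠ 0 := (shc_pos _).ne'
  field_simp
  ring
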